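/- For the Lie algebra of type (hc2) ([e₂,e₄]=e₃, [e₄,e₃]=e₂, [e₃,e₂]=e₄) with the standard hypercomplex HN-metric structure, the Lee forms θₐ(z) = gⁱʲ Fₐ(eᵢ,eⱼ,z), with Fₐ(x,y,z) = g((∇ₓJₐ)y, z), have the only nonzero components θ₁(e₂) = -1, θ₂(e₃) = -2, θ₃(e₄) = 2. -/

import Mathlib

noncomputable section

/-- The underlying 4-dimensional real vector space. -/
abbrev V : Type := Fin 4 → ℝ

/-- The standard basis of ℝ⁴. -/
def e : Fin 4 → V := fun i => Pi.single i 1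

/-- The neutral metric g(x,y) = x¹y¹ + x²y² - x³y³ - x⁴y⁴. -/
def g (x y : V) : ℝ := x 0 * y 0 + x 1 * y 1 - x 2 * y 2 - x 3 * y 3

/-- J₁ of the standard hypercomplex structure. -/
def J1 (x : V) : V := ![-x 1, x 0, x 3, -x 2]

/-- J₂ of the standard hypercomplex structure. -/
def J2 (x : V) : V := ![-x 2, -x 3, x 0, x 1]

/-- J₃ of the standard hypercomplex structure. -/
def J3 (x : V) : V := ![x 3, -x 2, x 1, -x 0]

/-- The bracket of type (hc2): [e₂,e₄]=e₃, [e₄,e₃]=e₂, [e₃,e₂]=e₄. -/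
def br (x y : V) : V :=
  ![0, x 3 * y 2 - x 2 * y 3, x 1 * y 3 - x 3 * y 1, x 2 * y 1 - x 1 * y 2]


/-- Structure tensor F(x,y,z) = g((∇ₓJ)y, z) = g(∇ₓ(Jy) - J(∇ₓy), z). -/
def F (J : V → V) (nabla : V → V → V) (x y z : V) : ℝ :=
  g (nabla x (J y) - J (nabla x y)) z

/-- Lee form θ(z) = Σᵢ gⁱⁱ F(eᵢ,eᵢ,z) with gⁱⁱ = (1,1,-1,-1). -/
def theta (J : V → V) (nabla : V → V → V) (z : V) : ℝ :=
  F J nabla (e 0) (e 0) z + F J nabla (e 1) (e 1) z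
    - F J nabla (e 2) (e 2) z - F J nabla (e 3) (e 3) z

/-!
`J₁` is `g`-skew and `J₂`, `J₃` are `g`-symmetric, so `g (J (∇ₓ y)) z = ± g (∇ₓ y) (J z)`.
Hence every term of `F`, and so of `θ`, is a value `g (∇ₓ _) _`, which the Koszul formula gives
directly; `∇` never has to be solved for.
-/

def koszul (b : V → V → V) (x y z : V) : ℝ :=
  g (b x y) z + g (b z x) y + g (b z y) x

lemma g_sub_left (u v z : V) : g (u - v) z = g u z - g v z := by
  simp only [g, Pi.sub_apply]; ring

lemma g_J1_left (x y : V) : g (J1 x) y = -1 * g x (J1 y) := by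
  simp [g, J1]; ring

lemma g_J2_left (x y : V) : g (J2 x) y = 1 * g x (J2 y) := by
  simp [g, J2]; ring

lemma g_J3_left (x y : V) : g (J3 x) y = 1 * g x (J3 y) := by
  simp [g, J3]; ring

lemma F_eq_koszul {b : V → V → V} {J : V → V} {σ : ℝ} {nabla : V → V → V}
    (hJ : ∀ x y, g (J x) y = σ * g x (J y))
    (hK : ∀ x y z, 2 * g (nabla x y) z = koszul b x y z) (x y z : V) :
    F J nabla x y z = (koszul b x (J y) z - σ * koszul b x y (J z)) / 2 := by
  have h₁ := hK x (J y) z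
  have h₂ := hK x y (J z)
  rw [F, g_sub_left, hJ]
  linear_combination h₁ / 2 - σ * h₂ / 2

/-- Lee forms of the (hc2) structure: θ₁(e₂)=-1, θ₂(e₃)=-2, θ₃(e₄)=2 are the
only nonzero components. -/
theorem hc2_lee_forms (nabla : V → V → V)
    (hK : ∀ x y z : V,
      2 * g (nabla x y) z = g (br x y) z + g (br z x) y + g (br z y) x) :
    (∀ i : Fin 4, theta J1 nabla (e i) = if i = 1 then -1 else 0) ∧
    (∀ i : Fin 4, theta J2 nabla (e i) = if i = 2 then -2 else 0) ∧
    (∀ i : Fin 4, theta J3 nabla (e i) = if i = 3 then 2 else 0) := by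
  refine ⟨fun i => ?_, fun i => ?_, fun i => ?_⟩
  · simp only [theta, F_eq_koszul g_J1_left hK]
    fin_cases i <;> simp [koszul, g, br, J1, e]
    all_goals norm_num
  · simp only [theta, F_eq_koszul g_J2_left hK]
    fin_cases i <;> simp [koszul, g, br, J2, e]
    all_goals norm_num
  · simp only [theta, F_eq_koszul g_J3_left hK]
    fin_cases i <;> simp [koszul, g, br, J3, e]
    all_goals norm_num
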